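/- arXiv:1006.1759 — 4 statements merged into one kernel-verified Lean document; each statement's English description precedes it below -/
import Mathlib

section
/- Every cofinite isomorphism θ between cofinite subspaces of X_rW_n has a unique maximal extension θ*: that is, there exists a maximal cofinite isomorphism extending θ, and any two maximal cofinite isomorphisms extending θ are equal. -/
/-- A point `x_i α` of `X_r W_n`: the letter `x_i` together with a word `α` over `{1,…,n}`. -/
abbrev HTPt (n r : ℕ) := Fin r × List (Fin n)

/-- The right action of the free monoid `W_n` on `X_r W_n`: `(x_i α) · w = x_i (α w)`. -/
def HTact {n r : ℕ} (u : HTPt n r) (w : List (Fin n)) : HTPt n r := (u.1, u.2 ++ w)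

/-- A subspace of `X_r W_n`: a nonempty subset closed under the right `W_n`-action. -/
def IsSubspace {n r : ℕ} (V : Set (HTPt n r)) : Prop :=
  V.Nonempty ∧ ∀ u ∈ V, ∀ w : List (Fin n), HTact u w ∈ V

/-- A cofinite subset of `X_r W_n`. -/
def IsCofinite {n r : ℕ} (V : Set (HTPt n r)) : Prop := Set.Finite Vᶜ

/-- A cofinite isomorphism of `X_r W_n`: a bijective homomorphism (partial map commuting with
the right `W_n`-action) between cofinite subspaces. -/
def IsCofIso {n r : ℕ} (θ : HTPt n r →. HTPt n r) : Prop :=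
  IsSubspace θ.Dom ∧ IsCofinite θ.Dom ∧ IsSubspace θ.ran ∧ IsCofinite θ.ran ∧
    (∀ u v, v ∈ θ u → ∀ w : List (Fin n), HTact v w ∈ θ (HTact u w)) ∧
    (∀ u₁ u₂ v, v ∈ θ u₁ → v ∈ θ u₂ → u₁ = u₂)

/-- `θ'` extends `θ`: `θ' u = θ u` whenever `θ u` is defined. -/
def HTExtends {n r : ℕ} (θ' θ : HTPt n r →. HTPt n r) : Prop :=
  ∀ u v, v ∈ θ u → v ∈ θ' u

/-- A maximal cofinite isomorphism: its only extension is itself. -/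
def IsMaxCofIso {n r : ℕ} (θ : HTPt n r →. HTPt n r) : Prop :=
  IsCofIso θ ∧ ∀ θ', IsCofIso θ' → HTExtends θ' θ → θ' = θ

/-- The underlying set of the Higman–Thompson group `G_{n,r}`: the maximal cofinite
isomorphisms of `X_r W_n`. -/
abbrev HT (n r : ℕ) := {θ : HTPt n r →. HTPt n r // IsMaxCofIso θ}

/-- `mul` is the Higman–Thompson multiplication: `mul φ₁ φ₂` is the (unique) maximal
extension of the composite `u ↦ φ₂ (φ₁ u)`. -/
def IsHTMul (n r : ℕ) (mul : HT n r → HT n r → HT n r) : Prop :=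
  ∀ φ₁ φ₂ : HT n r, HTExtends (mul φ₁ φ₂).val (PFun.comp φ₂.val φ₁.val)
/-- In a cofinite set, every point has some translate inside the set. -/
lemma HT_exists_word {n r : ℕ} (hn : 1 ≤ n) (S : Set (HTPt n r)) (hS : IsCofinite S)
    (u : HTPt n r) : ∃ w, HTact u w ∈ S := by
  by_contra h
  push_neg at h
  haveI : Nonempty (Fin n) := ⟨⟨0, hn⟩⟩
  have hinj : Function.Injective (HTact u) := by
    intro w w' hw
    exact List.append_cancel_left (congrArg Prod.snd hw)
  have hsub : Set.range (HTact u) ⊆ Sᶜ := by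
    rintro _ ⟨w, rfl⟩; exact h w
  exact (Set.infinite_range_of_injective hinj) (hS.subset hsub)

lemma HTact_right_cancel {n r : ℕ} {u u' : HTPt n r} {w : List (Fin n)}
    (h : HTact u w = HTact u' w) : u = u' := by
  obtain ⟨h1, h2⟩ := Prod.ext_iff.mp h
  exact Prod.ext h1 (List.append_cancel_right h2)

/-- Two cofinite isomorphisms extending the same `θ` agree on their common domain. -/
lemma HT_agree {n r : ℕ} (hn : 1 ≤ n) {θ θ₁ θ₂ : HTPt n r →. HTPt n r}
    (hθ : IsCofIso θ) (h1 : IsCofIso θ₁) (e1 : HTExtends θ₁ θ) (e2 : HTExtends θ₂ θ)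
    (h2compat : ∀ u v, v ∈ θ₂ u → ∀ w : List (Fin n), HTact v w ∈ θ₂ (HTact u w))
    {u v₁ v₂ : HTPt n r} (m1 : v₁ ∈ θ₁ u) (m2 : v₂ ∈ θ₂ u) : v₁ = v₂ := by
  obtain ⟨w, hw⟩ := HT_exists_word hn θ.Dom hθ.2.1 u
  rw [PFun.mem_dom] at hw
  obtain ⟨v₀, hv₀⟩ := hw
  have a1 : HTact v₁ w ∈ θ₁ (HTact u w) := h1.2.2.2.2.1 u v₁ m1 w
  have b1 : v₀ ∈ θ₁ (HTact u w) := e1 _ _ hv₀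
  have a2 : HTact v₂ w ∈ θ₂ (HTact u w) := h2compat u v₂ m2 w
  have b2 : v₀ ∈ θ₂ (HTact u w) := e2 _ _ hv₀
  exact HTact_right_cancel ((Part.mem_unique a1 b1).trans (Part.mem_unique a2 b2).symm)

/-- Two cofinite isomorphisms extending the same `θ` have compatible inverses. -/
lemma HT_inj {n r : ℕ} (hn : 1 ≤ n) {θ θ₁ θ₂ : HTPt n r →. HTPt n r}
    (hθ : IsCofIso θ) (h1 : IsCofIso θ₁) (h2 : IsCofIso θ₂)
    (e1 : HTExtends θ₁ θ) (e2 : HTExtends θ₂ θ)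
    {u₁ u₂ v : HTPt n r} (m1 : v ∈ θ₁ u₁) (m2 : v ∈ θ₂ u₂) : u₁ = u₂ := by
  obtain ⟨w, hw⟩ := HT_exists_word hn θ.ran hθ.2.2.2.1 v
  obtain ⟨u₀, hu₀⟩ := hw
  have a1 : HTact v w ∈ θ₁ (HTact u₁ w) := h1.2.2.2.2.1 u₁ v m1 w
  have b1 : HTact v w ∈ θ₁ u₀ := e1 _ _ hu₀
  have a2 : HTact v w ∈ θ₂ (HTact u₂ w) := h2.2.2.2.2.1 u₂ v m2 w
  have b2 : HTact v w ∈ θ₂ u₀ := e2 _ _ hu₀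
  have c1 : HTact u₁ w = u₀ := h1.2.2.2.2.2 _ _ _ a1 b1
  have c2 : HTact u₂ w = u₀ := h2.2.2.2.2.2 _ _ _ a2 b2
  exact HTact_right_cancel (c1.trans c2.symm)

/-- Every cofinite isomorphism `θ` of `X_r W_n` has a unique maximal extension. -/
theorem exists_unique_maximal_extension (n r : ℕ) (hn : 2 ≤ n) (hr : 1 ≤ r)
    (θ : HTPt n r →. HTPt n r) (hθ : IsCofIso θ) :
    ∃! θs : HTPt n r →. HTPt n r, IsMaxCofIso θs ∧ HTExtends θs θ := by
  have hn1 : 1 ≤ n := by omega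
  -- the union of all cofinite isomorphisms extending θ
  set R : HTPt n r → HTPt n r → Prop :=
    fun u v => ∃ θ', IsCofIso θ' ∧ HTExtends θ' θ ∧ v ∈ θ' u with hR
  have Rsingle : ∀ {u v₁ v₂}, R u v₁ → R u v₂ → v₁ = v₂ := by
    rintro u v₁ v₂ ⟨θ₁, c1, e1, m1⟩ ⟨θ₂, c2, e2, m2⟩
    exact HT_agree hn1 hθ c1 e1 e2 c2.2.2.2.2.1 m1 m2
  set θs : HTPt n r →. HTPt n r :=
    fun u => ⟨∃ v, R u v, fun h => h.choose⟩ with hθs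
  have mem_θs : ∀ u v, v ∈ θs u ↔ R u v := by
    intro u v
    constructor
    · rintro ⟨h, rfl⟩
      exact h.choose_spec
    · intro h
      exact ⟨⟨v, h⟩, Rsingle (Exists.choose_spec ⟨v, h⟩) h⟩
  have hext : HTExtends θs θ := by
    intro u v hv
    exact (mem_θs u v).mpr ⟨θ, hθ, fun _ _ h => h, hv⟩
  have dom_θs : ∀ u, u ∈ θs.Dom ↔ ∃ v, R u v := by
    intro u
    rw [PFun.mem_dom]
    exact ⟨fun ⟨v, hv⟩ => ⟨v, (mem_θs u v).mp hv⟩, fun ⟨v, hv⟩ => ⟨v, (mem_θs u v).mpr hv⟩⟩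
  -- θs is a cofinite isomorphism
  have hciso : IsCofIso θs := by
    obtain ⟨u0, hu0⟩ := hθ.1.1
    rw [PFun.mem_dom] at hu0
    obtain ⟨v0, hv0⟩ := hu0
    refine ⟨⟨⟨u0, (dom_θs u0).mpr ⟨v0, θ, hθ, fun _ _ h => h, hv0⟩⟩, ?_⟩, ?_, ⟨⟨v0, ?_⟩, ?_⟩, ?_, ?_, ?_⟩
    · -- Dom closed under the action
      intro u hu w
      obtain ⟨v, θ', c', e', m'⟩ := (dom_θs u).mp hu
      exact (dom_θs _).mpr ⟨HTact v w, θ', c', e', c'.2.2.2.2.1 u v m' w⟩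
    · -- Dom cofinite
      refine hθ.2.1.subset ?_
      intro u hu
      rw [Set.mem_compl_iff] at hu ⊢
      intro hc
      rw [PFun.mem_dom] at hc
      obtain ⟨v, hv⟩ := hc
      exact hu ((dom_θs u).mpr ⟨v, θ, hθ, fun _ _ h => h, hv⟩)
    · exact ⟨u0, hext u0 v0 hv0⟩
    · -- ran closed under the action
      rintro v ⟨u, hv⟩ w
      obtain ⟨θ', c', e', m'⟩ := (mem_θs u v).mp hv
      exact ⟨HTact u w, (mem_θs _ _).mpr ⟨θ', c', e', c'.2.2.2.2.1 u v m' w⟩⟩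
    · -- ran cofinite
      refine hθ.2.2.2.1.subset ?_
      intro v hv
      rw [Set.mem_compl_iff] at hv ⊢
      rintro ⟨u, hu⟩
      exact hv ⟨u, hext u v hu⟩
    · -- compatibility with the action
      intro u v hv w
      obtain ⟨θ', c', e', m'⟩ := (mem_θs u v).mp hv
      exact (mem_θs _ _).mpr ⟨θ', c', e', c'.2.2.2.2.1 u v m' w⟩
    · -- injectivity
      intro u₁ u₂ v hv1 hv2
      obtain ⟨θ₁, c1, e1, m1⟩ := (mem_θs u₁ v).mp hv1
      obtain ⟨θ₂, c2, e2, m2⟩ := (mem_θs u₂ v).mp hv2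
      exact HT_inj hn1 hθ c1 c2 e1 e2 m1 m2
  have hmax : IsMaxCofIso θs := by
    refine ⟨hciso, fun θ'' c'' e'' => ?_⟩
    apply PFun.ext
    intro u v
    constructor
    · intro hv
      exact (mem_θs u v).mpr ⟨θ'', c'', fun a b hb => e'' a b (hext a b hb), hv⟩
    · exact e'' u v
  refine ⟨θs, ⟨hmax, hext⟩, ?_⟩
  rintro τ ⟨⟨τciso, τmax⟩, τext⟩
  exact (τmax θs hciso (fun u v hv => (mem_θs u v).mpr ⟨τ, τciso, τext, hv⟩)).symm
end

section
/- The set of maximal cofinite isomorphisms of X_rW_n is a group under the operation sending (φ₁, φ₂) to the unique maximal extension of the cofinite isomorphism u ↦ φ₂(φ₁(u)) defined on φ₁⁻¹(range(φ₁) ∩ dom(φ₂)); the identity element is the identity map of X_rW_n, and the inverse of φ is the unique maximal extension of the set-theoretic inverse of φ. -/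
/-
A cofinite isomorphism `θ` determines its maximal extension pointwise: `u ↦ v` exactly when
`θ (u w) = v w` wherever `θ (u w)` is defined and `u w ∈ dom θ` for some word `w`. As `W_n` is
infinite and a cofinite set misses only finitely many points, any two points share an extension
word landing in a given cofinite set; this makes the extension injective and shows that it contains
every cofinite isomorphism extending `θ`. Hence two maximal cofinite isomorphisms extending a common
cofinite isomorphism coincide, and each group law reduces to exhibiting one cofinite isomorphism
that both sides extend: `φ₃ ∘ φ₂ ∘ φ₁` for associativity, and `φ ∘ φ⁻¹`, a restriction of the
identity, for inverses.
-/

namespace PFun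

variable {α β γ : Type*}

theorem mem_comp {f : β →. γ} {g : α →. β} {a : α} {c : γ} :
    c ∈ f.comp g a ↔ ∃ b ∈ g a, c ∈ f b :=
  Part.mem_bind_iff

theorem finite_image (f : α →. β) {s : Set α} (hs : s.Finite) : (f.image s).Finite := by
  refine (hs.biUnion fun a _ => Set.Subsingleton.finite (s := {b | b ∈ f a})
    fun _ h₁ _ h₂ => Part.mem_unique h₁ h₂).subset ?_
  rintro b ⟨a, ha, hb⟩
  exact Set.mem_biUnion ha hb

theorem finite_preimage (f : α →. β) (hf : ∀ a₁ a₂ b, b ∈ f a₁ → b ∈ f a₂ → a₁ = a₂)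
    {s : Set β} (hs : s.Finite) : (f.preimage s).Finite := by
  refine (hs.biUnion fun b _ => Set.Subsingleton.finite (s := {a | b ∈ f a})
    fun _ h₁ _ h₂ => hf _ _ b h₁ h₂).subset ?_
  rintro a ⟨b, hb, ha⟩
  exact Set.mem_biUnion hb ha

noncomputable def ofRel (R : α → β → Prop) : α →. β :=
  fun a => ⟨∃ b, R a b, fun h => h.choose⟩

theorem dom_ofRel (R : α → β → Prop) : (ofRel R).Dom = {a | ∃ b, R a b} := rfl

theorem rel_of_mem_ofRel {R : α → β → Prop} {a : α} {b : β} (h : b ∈ ofRel R a) : R a b := by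
  obtain ⟨h, rfl⟩ := h
  exact h.choose_spec

theorem mem_ofRel {R : α → β → Prop} {a : α} {b : β}
    (hR : ∀ b₁ b₂, R a b₁ → R a b₂ → b₁ = b₂) : b ∈ ofRel R a ↔ R a b :=
  ⟨rel_of_mem_ofRel, fun h => ⟨⟨b, h⟩, hR _ _ (Exists.choose_spec ⟨b, h⟩) h⟩⟩

end PFun

open PFun

variable {n r : ℕ}

theorem HTact_HTact (u : HTPt n r) (w w' : List (Fin n)) :
    HTact (HTact u w) w' = HTact u (w ++ w') := by
  simp [HTact]

theorem HTact_left_injective (w : List (Fin n)) :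
    Function.Injective fun u : HTPt n r => HTact u w := by
  rintro ⟨i, α⟩ ⟨j, β⟩ h
  simp only [HTact, Prod.mk.injEq, List.append_cancel_right_eq] at h
  rw [h.1, h.2]

theorem HTact_right_injective (u : HTPt n r) : Function.Injective (HTact u) := by
  intro w₁ w₂ h
  simpa [HTact] using h

theorem IsCofinite.mono {S T : Set (HTPt n r)} (hS : IsCofinite S) (h : S ⊆ T) :
    IsCofinite T :=
  hS.subset (Set.compl_subset_compl.2 h)

theorem IsCofinite.nonempty [Nonempty (Fin n)] [Nonempty (Fin r)] {S : Set (HTPt n r)}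
    (hS : IsCofinite S) : S.Nonempty := by
  simpa using hS.infinite_compl.nonempty

theorem IsCofinite.exists_HTact_mem₂ [Nonempty (Fin n)] {S : Set (HTPt n r)}
    (hS : IsCofinite S) (u₁ u₂ : HTPt n r) : ∃ w, HTact u₁ w ∈ S ∧ HTact u₂ w ∈ S := by
  have hbad (u : HTPt n r) : {w | HTact u w ∈ Sᶜ}.Finite :=
    hS.preimage (HTact_right_injective u).injOn
  obtain ⟨w, hw⟩ := ((hbad u₁).union (hbad u₂)).infinite_compl.nonempty
  exact ⟨w, by simpa [not_or] using hw⟩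

theorem IsCofinite.exists_HTact_mem [Nonempty (Fin n)] {S : Set (HTPt n r)}
    (hS : IsCofinite S) (u : HTPt n r) : ∃ w, HTact u w ∈ S :=
  (hS.exists_HTact_mem₂ u u).imp fun _ h => h.1

namespace IsCofIso

variable {θ : HTPt n r →. HTPt n r}

theorem isCofinite_dom (hθ : IsCofIso θ) : IsCofinite θ.Dom := hθ.2.1

theorem isCofinite_ran (hθ : IsCofIso θ) : IsCofinite θ.ran := hθ.2.2.2.1

theorem HTact_mem (hθ : IsCofIso θ) {u v : HTPt n r} (h : v ∈ θ u) (w : List (Fin n)) :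
    HTact v w ∈ θ (HTact u w) :=
  hθ.2.2.2.2.1 u v h w

theorem inj (hθ : IsCofIso θ) {u₁ u₂ v : HTPt n r} (h₁ : v ∈ θ u₁) (h₂ : v ∈ θ u₂) : u₁ = u₂ :=
  hθ.2.2.2.2.2 u₁ u₂ v h₁ h₂

theorem of_isCofinite [Nonempty (Fin n)] [Nonempty (Fin r)]
    (hd : IsCofinite θ.Dom) (hr : IsCofinite θ.ran)
    (he : ∀ u v, v ∈ θ u → ∀ w : List (Fin n), HTact v w ∈ θ (HTact u w))
    (hi : ∀ u₁ u₂ v, v ∈ θ u₁ → v ∈ θ u₂ → u₁ = u₂) : IsCofIso θ := by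
  refine ⟨⟨hd.nonempty, fun u hu w => ?_⟩, hd, ⟨hr.nonempty, fun v ⟨u, hv⟩ w => ?_⟩, hr, he, hi⟩
  · obtain ⟨v, hv⟩ := (mem_dom θ u).1 hu
    exact (mem_dom θ _).2 ⟨_, he u v hv w⟩
  · exact ⟨_, he u v hv w⟩

end IsCofIso

namespace HTExtends

variable {θ θ' θ'' : HTPt n r →. HTPt n r}

theorem refl (θ : HTPt n r →. HTPt n r) : HTExtends θ θ := fun _ _ h => h

theorem trans (h₁ : HTExtends θ'' θ') (h₂ : HTExtends θ' θ) : HTExtends θ'' θ :=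
  fun u v h => h₁ u v (h₂ u v h)

theorem antisymm (h₁ : HTExtends θ' θ) (h₂ : HTExtends θ θ') : θ' = θ :=
  PFun.ext fun u v => ⟨h₂ u v, h₁ u v⟩

theorem comp {φ φ' : HTPt n r →. HTPt n r} (h : HTExtends θ' θ) (hφ : HTExtends φ' φ) :
    HTExtends (φ'.comp θ') (φ.comp θ) := by
  intro u x hx
  obtain ⟨v, hv, hx⟩ := mem_comp.1 hx
  exact mem_comp.2 ⟨v, h u v hv, hφ v x hx⟩

theorem dom_subset (h : HTExtends θ' θ) : θ.Dom ⊆ θ'.Dom := by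
  intro u hu
  obtain ⟨v, hv⟩ := (mem_dom θ u).1 hu
  exact (mem_dom θ' u).2 ⟨v, h u v hv⟩

theorem ran_subset (h : HTExtends θ' θ) : θ.ran ⊆ θ'.ran :=
  fun _ ⟨u, hv⟩ => ⟨u, h _ _ hv⟩

end HTExtends

def IsMaxExtValue (θ : HTPt n r →. HTPt n r) (u v : HTPt n r) : Prop :=
  (∀ w x, x ∈ θ (HTact u w) → x = HTact v w) ∧ ∃ w, HTact u w ∈ θ.Dom

theorem IsMaxExtValue.unique {θ : HTPt n r →. HTPt n r} {u v₁ v₂ : HTPt n r}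
    (h₁ : IsMaxExtValue θ u v₁) (h₂ : IsMaxExtValue θ u v₂) : v₁ = v₂ := by
  obtain ⟨w, hw⟩ := h₁.2
  obtain ⟨x, hx⟩ := (mem_dom θ _).1 hw
  exact HTact_left_injective w ((h₁.1 w x hx).symm.trans (h₂.1 w x hx))

noncomputable def maxExt (θ : HTPt n r →. HTPt n r) : HTPt n r →. HTPt n r :=
  ofRel (IsMaxExtValue θ)

theorem mem_maxExt {θ : HTPt n r →. HTPt n r} {u v : HTPt n r} :
    v ∈ maxExt θ u ↔ IsMaxExtValue θ u v :=
  mem_ofRel fun _ _ => IsMaxExtValue.unique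

section MaxExt

variable [Nonempty (Fin n)] {θ θ' : HTPt n r →. HTPt n r}

theorem maxExt_extends_of_extends (hθ : IsCofinite θ.Dom) (hθ' : IsCofIso θ')
    (h : HTExtends θ' θ) : HTExtends (maxExt θ) θ' := fun u _ hv =>
  mem_maxExt.2 ⟨fun w _ hx => Part.mem_unique (h _ _ hx) (hθ'.HTact_mem hv w),
    hθ.exists_HTact_mem u⟩

theorem extends_maxExt (hθ : IsCofIso θ) : HTExtends (maxExt θ) θ :=
  maxExt_extends_of_extends hθ.isCofinite_dom hθ (.refl θ)

theorem HTact_mem_maxExt (hθ : IsCofinite θ.Dom) {u v : HTPt n r} (h : v ∈ maxExt θ u)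
    (w : List (Fin n)) : HTact v w ∈ maxExt θ (HTact u w) := by
  refine mem_maxExt.2 ⟨fun w' x hx => ?_, hθ.exists_HTact_mem _⟩
  rw [HTact_HTact] at hx ⊢
  exact (mem_maxExt.1 h).1 _ x hx

theorem maxExt_inj (hθ : IsCofIso θ) {u₁ u₂ v : HTPt n r} (h₁ : v ∈ maxExt θ u₁)
    (h₂ : v ∈ maxExt θ u₂) : u₁ = u₂ := by
  obtain ⟨w, hw₁, hw₂⟩ := hθ.isCofinite_dom.exists_HTact_mem₂ u₁ u₂
  obtain ⟨x₁, hx₁⟩ := (mem_dom θ _).1 hw₁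
  obtain ⟨x₂, hx₂⟩ := (mem_dom θ _).1 hw₂
  have hx : x₁ = x₂ := ((mem_maxExt.1 h₁).1 w x₁ hx₁).trans ((mem_maxExt.1 h₂).1 w x₂ hx₂).symm
  subst hx
  exact HTact_left_injective w (hθ.inj hx₁ hx₂)

variable [Nonempty (Fin r)]

theorem isCofIso_maxExt (hθ : IsCofIso θ) : IsCofIso (maxExt θ) :=
  .of_isCofinite (hθ.isCofinite_dom.mono (extends_maxExt hθ).dom_subset)
    (hθ.isCofinite_ran.mono (extends_maxExt hθ).ran_subset)
    (fun _ _ h => HTact_mem_maxExt hθ.isCofinite_dom h) (fun _ _ _ => maxExt_inj hθ)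

theorem isMaxCofIso_maxExt (hθ : IsCofIso θ) : IsMaxCofIso (maxExt θ) :=
  ⟨isCofIso_maxExt hθ, fun _ hθ' h => h.antisymm <|
    maxExt_extends_of_extends hθ.isCofinite_dom hθ' (h.trans (extends_maxExt hθ))⟩

theorem IsMaxCofIso.eq_maxExt (hθ : IsCofIso θ) (hθ' : IsMaxCofIso θ') (h : HTExtends θ' θ) :
    θ' = maxExt θ :=
  (hθ'.2 _ (isCofIso_maxExt hθ) (maxExt_extends_of_extends hθ.isCofinite_dom hθ'.1 h)).symm

theorem IsMaxCofIso.maxExt_eq (hθ : IsMaxCofIso θ) : maxExt θ = θ :=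
  (hθ.eq_maxExt hθ.1 (.refl θ)).symm

end MaxExt

noncomputable def pinv (θ : HTPt n r →. HTPt n r) : HTPt n r →. HTPt n r :=
  ofRel fun v u => v ∈ θ u

section Pinv

variable {θ : HTPt n r →. HTPt n r}

theorem mem_of_mem_pinv {u v : HTPt n r} (h : u ∈ pinv θ v) : v ∈ θ u :=
  rel_of_mem_ofRel (R := fun v u => v ∈ θ u) h

theorem IsCofIso.mem_pinv (hθ : IsCofIso θ) {u v : HTPt n r} : u ∈ pinv θ v ↔ v ∈ θ u :=
  mem_ofRel (R := fun v u => v ∈ θ u) fun _ _ => hθ.inj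

theorem comp_pinv_extends_id : HTExtends (PFun.id _) (θ.comp (pinv θ)) := by
  intro v x hx
  obtain ⟨u, hu, hx⟩ := mem_comp.1 hx
  exact Part.mem_unique hx (mem_of_mem_pinv hu) ▸ Part.mem_some v

end Pinv

section CompInv

variable [Nonempty (Fin n)] [Nonempty (Fin r)] {θ θ' : HTPt n r →. HTPt n r}

theorem IsCofIso.comp (hθ : IsCofIso θ) (hθ' : IsCofIso θ') : IsCofIso (θ'.comp θ) := by
  refine .of_isCofinite ?_ ?_ ?_ ?_
  · refine (hθ.isCofinite_dom.union (θ.finite_preimage (fun _ _ _ => hθ.inj)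
      hθ'.isCofinite_dom)).subset fun u hu => ?_
    rw [dom_comp] at hu
    by_cases hθu : u ∈ θ.Dom
    · obtain ⟨v, hv⟩ := (mem_dom θ u).1 hθu
      exact Or.inr ⟨v, fun hv' => hu ⟨v, hv', hv⟩, hv⟩
    · exact Or.inl hθu
  · refine (hθ'.isCofinite_ran.union (θ'.finite_image hθ.isCofinite_ran)).subset fun x hx => ?_
    by_cases hθ'x : x ∈ θ'.ran
    · obtain ⟨v, hv⟩ := hθ'x
      exact Or.inr ⟨v, fun ⟨u, hu⟩ => hx ⟨u, mem_comp.2 ⟨v, hu, hv⟩⟩, hv⟩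
    · exact Or.inl hθ'x
  · intro u x hx w
    obtain ⟨v, hv, hx⟩ := mem_comp.1 hx
    exact mem_comp.2 ⟨_, hθ.HTact_mem hv w, hθ'.HTact_mem hx w⟩
  · intro u₁ u₂ x hx₁ hx₂
    obtain ⟨v₁, hv₁, hx₁⟩ := mem_comp.1 hx₁
    obtain ⟨v₂, hv₂, hx₂⟩ := mem_comp.1 hx₂
    obtain rfl := hθ'.inj hx₁ hx₂
    exact hθ.inj hv₁ hv₂

theorem isCofIso_pinv (hθ : IsCofIso θ) : IsCofIso (pinv θ) := by
  have hran : (pinv θ).ran = θ.Dom := by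
    ext u
    exact (exists_congr fun _ => hθ.mem_pinv).trans (mem_dom θ u).symm
  exact .of_isCofinite (dom_ofRel _ ▸ hθ.isCofinite_ran) (hran ▸ hθ.isCofinite_dom)
    (fun v u hu w => hθ.mem_pinv.2 (hθ.HTact_mem (hθ.mem_pinv.1 hu) w))
    (fun _ _ _ h₁ h₂ => Part.mem_unique (mem_of_mem_pinv h₁) (mem_of_mem_pinv h₂))

theorem isMaxCofIso_id : IsMaxCofIso (PFun.id (HTPt n r)) := by
  have hid (u v : HTPt n r) : v ∈ PFun.id _ u ↔ v = u := Part.mem_some_iff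
  have hdom : (PFun.id (HTPt n r)).Dom = Set.univ :=
    Set.eq_univ_of_forall fun u => (mem_dom _ u).2 ⟨u, (hid u u).2 rfl⟩
  have hran : (PFun.id (HTPt n r)).ran = Set.univ :=
    Set.eq_univ_of_forall fun u => ⟨u, (hid u u).2 rfl⟩
  refine ⟨.of_isCofinite (by simp [IsCofinite, hdom]) (by simp [IsCofinite, hran]) ?_ ?_,
    fun θ' _ h => PFun.ext fun u v => ?_⟩
  · intro u v hv w
    rw [hid] at hv ⊢
    rw [hv]
  · exact fun u₁ u₂ v h₁ h₂ => ((hid _ _).1 h₁).symm.trans ((hid _ _).1 h₂)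
  · have hu : u ∈ θ' u := h u u ((hid u u).2 rfl)
    rw [hid]
    exact ⟨fun hv => Part.mem_unique hv hu, fun hv => hv ▸ hu⟩

end CompInv

namespace HT

variable [Nonempty (Fin n)] [Nonempty (Fin r)]

noncomputable instance : Mul (HT n r) :=
  ⟨fun a b => ⟨maxExt (b.val.comp a.val), isMaxCofIso_maxExt (a.2.1.comp b.2.1)⟩⟩

noncomputable instance : One (HT n r) := ⟨⟨PFun.id _, isMaxCofIso_id⟩⟩

noncomputable instance : Inv (HT n r) :=
  ⟨fun a => ⟨maxExt (pinv a.val), isMaxCofIso_maxExt (isCofIso_pinv a.2.1)⟩⟩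

theorem mul_extends (a b : HT n r) : HTExtends (a * b).val (b.val.comp a.val) :=
  extends_maxExt (a.2.1.comp b.2.1)

theorem inv_extends (a : HT n r) : HTExtends a⁻¹.val (pinv a.val) :=
  extends_maxExt (isCofIso_pinv a.2.1)

theorem eq_of_extends {θ : HTPt n r →. HTPt n r} (hθ : IsCofIso θ) {a b : HT n r}
    (ha : HTExtends a.val θ) (hb : HTExtends b.val θ) : a = b :=
  Subtype.ext ((a.2.eq_maxExt hθ ha).trans (b.2.eq_maxExt hθ hb).symm)

protected theorem mul_assoc (a b c : HT n r) : a * b * c = a * (b * c) := by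
  refine eq_of_extends ((a.2.1.comp b.2.1).comp c.2.1) ?_ ?_
  · exact (mul_extends _ c).trans ((mul_extends a b).comp (.refl _))
  · rw [← PFun.comp_assoc]
    exact (mul_extends a _).trans ((HTExtends.refl _).comp (mul_extends b c))

protected theorem one_mul (a : HT n r) : 1 * a = a :=
  Subtype.ext <| (congrArg maxExt (PFun.comp_id a.val)).trans a.2.maxExt_eq

protected theorem inv_mul_cancel (a : HT n r) : a⁻¹ * a = 1 :=
  eq_of_extends ((isCofIso_pinv a.2.1).comp a.2.1)
    ((mul_extends _ a).trans ((inv_extends a).comp (.refl _))) comp_pinv_extends_id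

noncomputable instance : Group (HT n r) :=
  Group.ofLeftAxioms HT.mul_assoc HT.one_mul HT.inv_mul_cancel

end HT

/-- The set of maximal cofinite isomorphisms of `X_r W_n` is a group under the operation
sending `(φ₁, φ₂)` to the unique maximal extension of `u ↦ φ₂ (φ₁ u)`; the identity element is
the identity map of `X_r W_n`, and the inverse of `φ` is the unique maximal extension of the
set-theoretic inverse of `φ`. -/
theorem maxCofIso_group (n r : ℕ) (hn : 2 ≤ n) (hr : 1 ≤ r) :
    ∃ (mul : HT n r → HT n r → HT n r) (one : HT n r) (inv : HT n r → HT n r),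
      (∀ a b c, mul (mul a b) c = mul a (mul b c)) ∧
      (∀ a, mul one a = a) ∧ (∀ a, mul a one = a) ∧
      (∀ a, mul (inv a) a = one) ∧ (∀ a, mul a (inv a) = one) ∧
      IsHTMul n r mul ∧
      one.val = PFun.lift id ∧
      (∀ φ : HT n r, ∀ u v, v ∈ φ.val u → u ∈ (inv φ).val v) := by
  have : Nonempty (Fin n) := Fin.pos_iff_nonempty.1 (by omega)
  have : Nonempty (Fin r) := Fin.pos_iff_nonempty.1 hr
  exact ⟨(· * ·), 1, (·⁻¹), mul_assoc, one_mul, mul_one, inv_mul_cancel, mul_inv_cancel,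
    HT.mul_extends, (PFun.coe_id _).symm,
    fun φ u v hv => HT.inv_extends φ v u (φ.2.1.mem_pinv.2 hv)⟩
end

section
/- Let K be a field, n ≥ 2 an integer, and r, s ≥ 1 integers with r ≡ s (mod n−1). Then the matrix rings M_r(L_n) and M_s(L_n) are isomorphic as K-algebras. -/
open scoped BigOperators

/-- Defining relations of the Leavitt algebra `L_K(1,n)`. -/
inductive LeavittRel (K : Type) [Field K] (n : ℕ) :
    FreeAlgebra K (Fin n ⊕ Fin n) → FreeAlgebra K (Fin n ⊕ Fin n) → Prop
  | xy (i j : Fin n) :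
      LeavittRel K n (FreeAlgebra.ι K (Sum.inl i) * FreeAlgebra.ι K (Sum.inr j))
        (if i = j then 1 else 0)
  | yx :
      LeavittRel K n (∑ j : Fin n, FreeAlgebra.ι K (Sum.inr j) * FreeAlgebra.ι K (Sum.inl j)) 1

/-- The Leavitt algebra `L_n = L_K(1,n)`. -/
abbrev Leavitt (K : Type) [Field K] (n : ℕ) := RingQuot (LeavittRel K n)

/-- The generator `x_i` of the Leavitt algebra. -/
noncomputable def lx (K : Type) [Field K] (n : ℕ) (i : Fin n) : Leavitt K n :=
  RingQuot.mkAlgHom K (LeavittRel K n) (FreeAlgebra.ι K (Sum.inl i))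

/-- The generator `y_i` of the Leavitt algebra. -/
noncomputable def ly (K : Type) [Field K] (n : ℕ) (i : Fin n) : Leavitt K n :=
  RingQuot.mkAlgHom K (LeavittRel K n) (FreeAlgebra.ι K (Sum.inr i))

/-- `x_I = x_{i_k} ⋯ x_{i_1}` for a word `I = (i_1, …, i_k)`. -/
noncomputable def xW (K : Type) [Field K] (n : ℕ) (I : List (Fin n)) : Leavitt K n :=
  (I.reverse.map (lx K n)).prod

/-- `y_I = y_{i_1} ⋯ y_{i_k}` for a word `I = (i_1, …, i_k)`. -/
noncomputable def yW (K : Type) [Field K] (n : ℕ) (I : List (Fin n)) : Leavitt K n :=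
  (I.map (ly K n)).prod

/-- Auxiliary anti-homomorphism used to construct the involution on `L_n`. -/
noncomputable def leavittStarAux (K : Type) [Field K] (n : ℕ) :
    FreeAlgebra K (Fin n ⊕ Fin n) →ₐ[K] (Leavitt K n)ᵐᵒᵖ :=
  FreeAlgebra.lift K fun s =>
    MulOpposite.op (RingQuot.mkAlgHom K (LeavittRel K n) (FreeAlgebra.ι K s.swap))

theorem leavittStarAux_rel (K : Type) [Field K] (n : ℕ) :
    ∀ ⦃a b : FreeAlgebra K (Fin n ⊕ Fin n)⦄, LeavittRel K n a b →
      leavittStarAux K n a = leavittStarAux K n b := by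
  intro a b h
  induction h with
  | xy i j =>
    have h1 : (RingQuot.mkAlgHom K (LeavittRel K n))
        (FreeAlgebra.ι K (Sum.inl j) * FreeAlgebra.ι K (Sum.inr i)) =
        (RingQuot.mkAlgHom K (LeavittRel K n)) (if j = i then 1 else 0) :=
      RingQuot.mkAlgHom_rel K (LeavittRel.xy j i)
    simp only [leavittStarAux, map_mul, FreeAlgebra.lift_ι_apply, Sum.swap_inl, Sum.swap_inr]
    rw [← MulOpposite.op_mul, ← map_mul, h1]
    by_cases hij : i = j
    · subst hij; simp
    · simp [hij, Ne.symm hij]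
  | yx =>
    have h1 : (RingQuot.mkAlgHom K (LeavittRel K n))
        (∑ j : Fin n, FreeAlgebra.ι K (Sum.inr j) * FreeAlgebra.ι K (Sum.inl j)) =
        (RingQuot.mkAlgHom K (LeavittRel K n)) 1 :=
      RingQuot.mkAlgHom_rel K LeavittRel.yx
    simp only [leavittStarAux, map_sum, map_mul, FreeAlgebra.lift_ι_apply, Sum.swap_inl,
      Sum.swap_inr, map_one]
    have key : ∀ x : Fin n,
        MulOpposite.op ((RingQuot.mkAlgHom K (LeavittRel K n)) (FreeAlgebra.ι K (Sum.inl x))) *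
          MulOpposite.op ((RingQuot.mkAlgHom K (LeavittRel K n)) (FreeAlgebra.ι K (Sum.inr x))) =
        MulOpposite.opAddEquiv ((RingQuot.mkAlgHom K (LeavittRel K n))
          (FreeAlgebra.ι K (Sum.inr x) * FreeAlgebra.ι K (Sum.inl x))) := by
      intro x; rw [map_mul]; rfl
    rw [Finset.sum_congr rfl fun x _ => key x, ← map_sum, ← map_sum, h1, map_one]
    rfl

/-- The involution `*` on the Leavitt algebra, as an algebra map into the opposite algebra. -/
noncomputable def lstarHom (K : Type) [Field K] (n : ℕ) :
    Leavitt K n →ₐ[K] (Leavitt K n)ᵐᵒᵖ :=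
  RingQuot.liftAlgHom K ⟨leavittStarAux K n, leavittStarAux_rel K n⟩

/-- The involution `*` on the Leavitt algebra: the unique `K`-linear ring anti-automorphism
with `x_i* = y_i` and `y_i* = x_i`. -/
noncomputable def lstar (K : Type) [Field K] (n : ℕ) (a : Leavitt K n) : Leavitt K n :=
  (lstarHom K n a).unop

/-- An element of `L_n` which is a finite (possibly empty) sum of monomials `y_I x_J`. -/
def IsSumYX (K : Type) [Field K] (n : ℕ) (a : Leavitt K n) : Prop :=
  ∃ (m : ℕ) (I J : Fin m → List (Fin n)), a = ∑ i, yW K n (I i) * xW K n (J i)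

/-- The induced involution on matrices over `L_n`: `(A*)_{ij} = (A_{ji})*`. -/
noncomputable def mstar (K : Type) [Field K] (n r : ℕ)
    (A : Matrix (Fin r) (Fin r) (Leavitt K n)) : Matrix (Fin r) (Fin r) (Leavitt K n) :=
  fun i j => lstar K n (A j i)

/-- The set `P_{n,r}` of unitary matrices over `L_n` all of whose entries are finite sums of
monomials `y_I x_J`. -/
def PsetM (K : Type) [Field K] (n r : ℕ) : Set (Matrix (Fin r) (Fin r) (Leavitt K n)) :=
  {A | (A * mstar K n r A = 1 ∧ mstar K n r A * A = 1) ∧ ∀ i j, IsSumYX K n (A i j)}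

/-- `B` is a complete prefix code: a finite nonempty set of pairwise incomparable words such
that every word is comparable with some element of `B`. -/
def IsCPC (n : ℕ) (B : Set (List (Fin n))) : Prop :=
  B.Finite ∧ B.Nonempty ∧ (∀ u ∈ B, ∀ v ∈ B, u ≠ v → ¬ u <+: v) ∧
    (∀ w : List (Fin n), ∃ u ∈ B, u <+: w ∨ w <+: u)

section Conj
variable {K' : Type*} [CommSemiring K'] {R : Type*} [Ring R] [Algebra K' R]
variable {m p : Type*} [Fintype m] [Fintype p] [DecidableEq m] [DecidableEq p]

/-- Conjugation by rectangular matrices `u, v` with `u * v = 1 = v * u` gives an algebra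
equivalence of matrix algebras. -/
noncomputable def matrixConjEquiv (u : Matrix m p R) (v : Matrix p m R)
    (huv : u * v = 1) (hvu : v * u = 1) :
    Matrix m m R ≃ₐ[K'] Matrix p p R where
  toFun A := v * A * u
  invFun B := u * B * v
  left_inv A := by
    simp only [Matrix.mul_assoc]
    rw [huv, Matrix.mul_one, ← Matrix.mul_assoc, huv, Matrix.one_mul]
  right_inv B := by
    simp only [Matrix.mul_assoc]
    rw [hvu, Matrix.mul_one, ← Matrix.mul_assoc, hvu, Matrix.one_mul]
  map_mul' A B := by
    simp only [Matrix.mul_assoc]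
    rw [← Matrix.mul_assoc u v (B * u), huv, Matrix.one_mul]
  map_add' A B := by simp [Matrix.mul_add, Matrix.add_mul]
  commutes' k := by
    show v * (algebraMap K' (Matrix m m R) k) * u = algebraMap K' (Matrix p p R) k
    rw [Algebra.algebraMap_eq_smul_one, Algebra.algebraMap_eq_smul_one,
      Matrix.mul_smul, Matrix.mul_one, Matrix.smul_mul, hvu]
end Conj

theorem lx_mul_ly (K : Type) [Field K] (n : ℕ) (i j : Fin n) :
    lx K n i * ly K n j = if i = j then 1 else 0 := by
  have h := RingQuot.mkAlgHom_rel K (LeavittRel.xy (K := K) i j)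
  rw [map_mul] at h
  rw [lx, ly, h]
  by_cases hij : i = j <;> simp [hij]

theorem sum_ly_mul_lx (K : Type) [Field K] (n : ℕ) :
    ∑ j : Fin n, ly K n j * lx K n j = 1 := by
  have h := RingQuot.mkAlgHom_rel K (LeavittRel.yx (K := K) (n := n))
  rw [map_sum] at h
  simp only [map_mul] at h
  simp only [ly, lx]
  rw [h, map_one]

/-- The column of generators `x_i` as an `n × 1` matrix (block form). -/
noncomputable def lxCol (K : Type) [Field K] (n : ℕ) : Matrix (Fin n) (Fin 1) (Leavitt K n) :=
  fun i _ => lx K n i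

/-- The row of generators `y_i` as a `1 × n` matrix (block form). -/
noncomputable def lyRow (K : Type) [Field K] (n : ℕ) : Matrix (Fin 1) (Fin n) (Leavitt K n) :=
  fun _ j => ly K n j

theorem lxCol_mul_lyRow (K : Type) [Field K] (n : ℕ) :
    lxCol K n * lyRow K n = 1 := by
  ext i j
  simp [Matrix.mul_apply, lxCol, lyRow, lx_mul_ly, Matrix.one_apply]

theorem lyRow_mul_lxCol (K : Type) [Field K] (n : ℕ) :
    lyRow K n * lxCol K n = 1 := by
  ext i j
  have : i = j := Subsingleton.elim i j
  subst this
  simp [Matrix.mul_apply, lyRow, lxCol, sum_ly_mul_lx, Matrix.one_apply]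

/-- The basic step: `M_{1+t}(L_n) ≅ M_{n+t}(L_n)`. -/
noncomputable def leavittStep (K : Type) [Field K] (n t : ℕ) :
    Matrix (Fin (1 + t)) (Fin (1 + t)) (Leavitt K n) ≃ₐ[K]
      Matrix (Fin (n + t)) (Fin (n + t)) (Leavitt K n) := by
  let u : Matrix (Fin 1 ⊕ Fin t) (Fin n ⊕ Fin t) (Leavitt K n) :=
    Matrix.fromBlocks (lyRow K n) 0 0 1
  let v : Matrix (Fin n ⊕ Fin t) (Fin 1 ⊕ Fin t) (Leavitt K n) :=
    Matrix.fromBlocks (lxCol K n) 0 0 1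
  have huv : u * v = 1 := by
    simp only [u, v, Matrix.fromBlocks_multiply]
    rw [lyRow_mul_lxCol]
    simp [Matrix.fromBlocks_one]
  have hvu : v * u = 1 := by
    simp only [u, v, Matrix.fromBlocks_multiply]
    rw [lxCol_mul_lyRow]
    simp [Matrix.fromBlocks_one]
  exact ((Matrix.reindexAlgEquiv K _ finSumFinEquiv).symm.trans
    (matrixConjEquiv u v huv hvu)).trans (Matrix.reindexAlgEquiv K _ finSumFinEquiv)

theorem leavitt_step' (K : Type) [Field K] (n : ℕ) (hn : 2 ≤ n) (r : ℕ) (hr : 1 ≤ r) :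
    Nonempty (Matrix (Fin r) (Fin r) (Leavitt K n) ≃ₐ[K]
      Matrix (Fin (r + (n - 1))) (Fin (r + (n - 1))) (Leavitt K n)) := by
  have h1 : r = 1 + (r - 1) := by omega
  have h2 : n + (r - 1) = r + (n - 1) := by omega
  exact ⟨(Matrix.reindexAlgEquiv K _ (finCongr h1)).trans
    ((leavittStep K n (r - 1)).trans (Matrix.reindexAlgEquiv K _ (finCongr h2)))⟩

theorem leavitt_iter (K : Type) [Field K] (n : ℕ) (hn : 2 ≤ n) (r : ℕ) (hr : 1 ≤ r) (k : ℕ) :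
    Nonempty (Matrix (Fin r) (Fin r) (Leavitt K n) ≃ₐ[K]
      Matrix (Fin (r + k * (n - 1))) (Fin (r + k * (n - 1))) (Leavitt K n)) := by
  induction k with
  | zero => exact ⟨Matrix.reindexAlgEquiv K _ (finCongr (by omega))⟩
  | succ k ih =>
    obtain ⟨e⟩ := ih
    obtain ⟨e'⟩ := leavitt_step' K n hn (r + k * (n - 1)) (by omega)
    exact ⟨(e.trans e').trans (Matrix.reindexAlgEquiv K _ (finCongr (by ring)))⟩

theorem leavitt_le (K : Type) [Field K] (n : ℕ) (hn : 2 ≤ n)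
    (r s : ℕ) (hr : 1 ≤ r) (hrs : r ≤ s) (hmod : r ≡ s [MOD n - 1]) :
    Nonempty (Matrix (Fin r) (Fin r) (Leavitt K n) ≃ₐ[K]
      Matrix (Fin s) (Fin s) (Leavitt K n)) := by
  have hdvd : (n - 1) ∣ s - r := (Nat.modEq_iff_dvd' hrs).mp hmod
  obtain ⟨k, hk⟩ := hdvd
  have hs : s = r + k * (n - 1) := by rw [Nat.mul_comm]; omega
  subst hs
  exact leavitt_iter K n hn r hr k


/-- If `r ≡ s (mod n-1)` then `M_r(L_n)` and `M_s(L_n)` are isomorphic `K`-algebras. -/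
theorem leavitt_matrix_iso_of_modEq (K : Type) [Field K] (n : ℕ) (hn : 2 ≤ n)
    (r s : ℕ) (hr : 1 ≤ r) (hs : 1 ≤ s) (hmod : r ≡ s [MOD n - 1]) :
    Nonempty (Matrix (Fin r) (Fin r) (Leavitt K n) ≃ₐ[K]
      Matrix (Fin s) (Fin s) (Leavitt K n)) := by
  rcases le_total r s with h | h
  · exact leavitt_le K n hn r s hr h hmod
  · obtain ⟨e⟩ := leavitt_le K n hn s r hs h hmod.symm
    exact ⟨e.symm⟩
end

section
/- Let G be a finitely generated abelian group (written additively), let x ∈ G be an element of finite order n, and let c, d be positive integers. Then there exists a group automorphism φ: G → G with φ(c·x) = d·x if and only if gcd(c, n) = gcd(d, n). -/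
/-!
An automorphism preserves orders, and `c • x` has order `n / gcd(c, n)`; this gives one
direction. Conversely, with `g = gcd(c, n) = gcd(d, n)` and `y = g • x`, both `c • x` and `d • x`
are multiples `a • y` with `a` coprime to the order `m` of `y`, so it suffices to map `y` to
`a • y`. By the structure theorem `G ≃ ℤ^r × T` with `T` finite of exponent `N`, and `y` lies in
`T`. Since `m ∣ N`, the units of `ZMod N` surject onto those of `ZMod m`, so `a` lifts to a unit
`u` modulo `N`; multiplication by `u` is an automorphism of `T` and acts on `y` as `a` does.
-/

open DirectSum

section

variable {T : Type*} [AddCommGroup T]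

theorem exists_addAut_apply_eq_nsmul_of_nsmul_eq_zero {N : ℕ} [NeZero N]
    (hN : ∀ t : T, N • t = 0) {y : T} {a : ℕ} (ha : a.Coprime (addOrderOf y)) :
    ∃ φ : T ≃+ T, φ y = a • y := by
  let := AddCommGroup.zmodModule hN
  have hyN : addOrderOf y ∣ N := addOrderOf_dvd_of_nsmul_eq_zero (hN y)
  obtain ⟨u, hu⟩ := ZMod.unitsMap_surjective hyN (ZMod.unitOfCoprime a ha)
  have hua : (((u : ZMod N).val : ℕ) : ZMod (addOrderOf y)) = a := by
    rw [← ZMod.cast_eq_val, ← ZMod.unitsMap_val hyN, hu, ZMod.coe_unitOfCoprime]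
  refine ⟨DistribMulAction.toAddEquiv T u, ?_⟩
  rw [DistribMulAction.toAddEquiv_apply, Units.smul_def, ← ZMod.natCast_zmod_val (u : ZMod N),
    Nat.cast_smul_eq_nsmul, nsmul_eq_nsmul_iff_modEq, ← ZMod.natCast_eq_natCast_iff, hua]

theorem exists_addAut_prod_apply_eq_nsmul {F : Type*} [AddCommGroup F] [IsAddTorsionFree F]
    [Finite T] {y : F × T} (hy : IsOfFinAddOrder y) {a : ℕ} (ha : a.Coprime (addOrderOf y)) :
    ∃ φ : F × T ≃+ F × T, φ y = a • y := by
  obtain ⟨y₁, y₂⟩ := y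
  obtain rfl : y₁ = 0 := hy.fst.eq_zero'
  rw [Prod.addOrderOf, addOrderOf_zero, Nat.lcm_one_left] at ha
  dsimp only at ha
  have : NeZero (AddMonoid.exponent T) := ⟨AddMonoid.ExponentExists.of_finite.exponent_ne_zero⟩
  obtain ⟨ψ, hψ⟩ := exists_addAut_apply_eq_nsmul_of_nsmul_eq_zero
    AddMonoid.exponent_nsmul_eq_zero ha
  exact ⟨(AddEquiv.refl F).prodCongr ψ, Prod.ext (smul_zero a).symm hψ⟩

end

section

variable {G : Type*} [AddCommGroup G]

theorem AddGroup.FG.exists_addAut_apply_eq_nsmul (hG : AddGroup.FG G) {y : G}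
    (hy : IsOfFinAddOrder y) {a : ℕ} (ha : a.Coprime (addOrderOf y)) :
    ∃ φ : G ≃+ G, φ y = a • y := by
  obtain ⟨r, ι, _, p, hp, e, ⟨f⟩⟩ := AddCommGroup.equiv_free_prod_directSum_zmod G
  have : ∀ i, NeZero (p i ^ e i) := fun i => ⟨pow_ne_zero _ (hp i).ne_zero⟩
  have : Finite (⨁ i, ZMod (p i ^ e i)) := Finite.of_equiv _ DFinsupp.equivFunOnFintype.symm
  have hfy : IsOfFinAddOrder (f y) := f.toAddMonoidHom.isOfFinAddOrder hy
  have ha' : a.Coprime (addOrderOf (f y)) := by rwa [f.addOrderOf_eq]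
  obtain ⟨ψ, hψ⟩ := exists_addAut_prod_apply_eq_nsmul hfy ha'
  exact ⟨f.trans (ψ.trans f.symm), by simp [hψ]⟩

theorem IsOfFinAddOrder.addOrderOf_nsmul_eq_iff {x : G} (hx : IsOfFinAddOrder x) {c d : ℕ} :
    addOrderOf (c • x) = addOrderOf (d • x) ↔
      c.gcd (addOrderOf x) = d.gcd (addOrderOf x) := by
  have hn := hx.addOrderOf_pos.ne'
  rw [hx.addOrderOf_nsmul, hx.addOrderOf_nsmul, Nat.gcd_comm c, Nat.gcd_comm d]
  refine ⟨fun h => ?_, fun h => by rw [h]⟩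
  rw [← Nat.div_div_self (Nat.gcd_dvd_left _ c) hn, h,
    Nat.div_div_self (Nat.gcd_dvd_left _ d) hn]

theorem AddGroup.FG.exists_addAut_apply_nsmul_eq_nsmul (hG : AddGroup.FG G) {x : G}
    (hx : IsOfFinAddOrder x) {c d : ℕ} (h : c.gcd (addOrderOf x) = d.gcd (addOrderOf x)) :
    ∃ φ : G ≃+ G, φ (c • x) = d • x := by
  set n := addOrderOf x
  set g := c.gcd n
  have hg : 0 < g := Nat.gcd_pos_of_pos_right c hx.addOrderOf_pos
  have hy : addOrderOf (g • x) = n / g := by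
    rw [hx.addOrderOf_nsmul, Nat.gcd_eq_right (Nat.gcd_dvd_right c n)]
  have hc : (c / g).Coprime (addOrderOf (g • x)) := hy ▸ Nat.coprime_div_gcd_div_gcd hg
  have hd : (d / g).Coprime (addOrderOf (g • x)) :=
    hy ▸ h ▸ Nat.coprime_div_gcd_div_gcd (h ▸ hg)
  obtain ⟨φc, hφc⟩ := hG.exists_addAut_apply_eq_nsmul hx.nsmul hc
  obtain ⟨φd, hφd⟩ := hG.exists_addAut_apply_eq_nsmul hx.nsmul hd
  have hcx : c • x = (c / g) • g • x := by
    rw [smul_smul, Nat.div_mul_cancel (Nat.gcd_dvd_left c n)]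
  have hdx : d • x = (d / g) • g • x := by
    rw [smul_smul, Nat.div_mul_cancel (h ▸ Nat.gcd_dvd_left d n)]
  refine ⟨φc.symm.trans φd, ?_⟩
  rw [AddEquiv.trans_apply, hcx, ← hφc, φc.symm_apply_apply, hφd, hdx]

end

theorem exists_addAut_smul_eq_iff_general (G : Type*) [AddCommGroup G] (hG : AddGroup.FG G)
    (x : G) (n : ℕ) (hn : 0 < n) (hx : addOrderOf x = n)
    (c d : ℕ) :
    (∃ φ : G ≃+ G, φ (c • x) = d • x) ↔ Nat.gcd c n = Nat.gcd d n := by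
  subst hx
  have hfin : IsOfFinAddOrder x := addOrderOf_pos_iff.mp hn
  constructor
  · rintro ⟨φ, hφ⟩
    rw [← hfin.addOrderOf_nsmul_eq_iff, ← hφ, φ.addOrderOf_eq]
  · exact hG.exists_addAut_apply_nsmul_eq_nsmul hfin

/-- Let `G` be a finitely generated abelian group, `x ∈ G` an element of finite order `n`, and
`c, d` positive integers. There is an automorphism `φ` of `G` with `φ (c • x) = d • x` if and
only if `gcd c n = gcd d n`. -/
theorem exists_addAut_smul_eq_iff (G : Type*) [AddCommGroup G] (hG : AddGroup.FG G)
    (x : G) (n : ℕ) (hn : 0 < n) (hx : addOrderOf x = n)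
    (c d : ℕ) (hc : 0 < c) (hd : 0 < d) :
    (∃ φ : G ≃+ G, φ (c • x) = d • x) ↔ Nat.gcd c n = Nat.gcd d n :=
  exists_addAut_smul_eq_iff_general G hG x n hn hx c d
end
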